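/- arXiv:1806.00841 — 2 statements merged into one kernel-verified Lean document; each statement's English description precedes it below -/
import Mathlib

section
/- Bounded distortion for the Gauss map: there exists C > 0 such that for every n ≥ 1, every word (i_1,…,i_n) ∈ ℕ^n, and all x, y ∈ I_{i_1…i_n}, one has C^{−1} ≤ (T^n)′(x)/(T^n)′(y) ≤ C; moreover, for every x ∈ I_{i_1…i_n}, C^{−1} ≤ |(T^n)′(x)|·|I_{i_1…i_n}| ≤ C, where |I_{i_1…i_n}| denotes the diameter of I_{i_1…i_n}. -/
/-!
The cylinder of a word `w = a₁ ⋯ aₙ` is the image of the irrationals of `(0,1)` under the inverse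
branch `φ_w t = 1/(a₁ + 1/(a₂ + ⋯ + 1/(aₙ + t)))` of `Tⁿ`, a Möbius map `t ↦ (p + p' t)/(q + q' t)`
whose coefficients are continuants with `q' ≤ q`. Writing `D(t) = q + q' t ∈ [q, 2q]`, the chain
rule along the branch gives `(Tⁿ)'(φ_w t) = (-1)ⁿ D(t)²`, and induction on `w` gives
`|φ_w t - φ_w s| = |t - s| / (D(t) D(s))`. Hence `|(Tⁿ)'|` is comparable to `q²` on the whole
cylinder and its diameter to `q⁻²`.
-/

/-- The Gauss map `T x = 1/x - ⌊1/x⌋` (with `T 0 = 0`). -/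
noncomputable def gaussMap (x : ℝ) : ℝ := if x = 0 then 0 else Int.fract x⁻¹

/-- The `k`-th continued fraction digit of `x`: `i_{k+1} = ⌊1/(T^k x)⌋`. -/
noncomputable def cfDigit (x : ℝ) (k : ℕ) : ℕ := ⌊(gaussMap^[k] x)⁻¹⌋₊

/-- The cylinder `I_{i_1…i_n}`: irrationals of `(0,1)` whose continued fraction expansion
starts with the word `i`. -/
def wordCyl (n : ℕ) (i : Fin n → ℕ+) : Set ℝ :=
  {x | x ∈ Set.Ioo (0 : ℝ) 1 ∧ Irrational x ∧ ∀ k : Fin n, cfDigit x k = (i k : ℕ)}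

open Set

section GaussMap

theorem gaussMap_eq_inv_sub_natCast {x : ℝ} (a : ℕ) (hx : x ≠ 0) (h : x⁻¹ ∈ Ico (a : ℝ) (a + 1)) :
    gaussMap x = x⁻¹ - a := by
  have hfloor : ⌊x⁻¹⌋ = (a : ℤ) := Int.floor_eq_iff.mpr (by exact_mod_cast h)
  rw [gaussMap, if_neg hx, Int.fract, hfloor, Int.cast_natCast]

theorem gaussMap_inv_natCast_add (a : ℕ) {s : ℝ} (hs : s ∈ Ioo (0 : ℝ) 1) :
    gaussMap ((a : ℝ) + s)⁻¹ = s := by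
  have hpos : 0 < (a : ℝ) + s := by linarith [hs.1, a.cast_nonneg (α := ℝ)]
  have hmem : ((a : ℝ) + s)⁻¹⁻¹ ∈ Ico (a : ℝ) (a + 1) := by
    rw [inv_inv]
    constructor <;> linarith [hs.1, hs.2]
  rw [gaussMap_eq_inv_sub_natCast a (inv_ne_zero hpos.ne') hmem, inv_inv, add_sub_cancel_left]

theorem gaussMap_eq_inv_sub_floor {x : ℝ} (hx : 0 < x) : gaussMap x = x⁻¹ - ⌊x⁻¹⌋₊ :=
  gaussMap_eq_inv_sub_natCast _ hx.ne'
    ⟨Nat.floor_le (inv_pos.mpr hx).le, Nat.lt_floor_add_one _⟩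

theorem hasDerivAt_gaussMap (a : ℕ) {x : ℝ} (hx : x ≠ 0) (h : x⁻¹ ∈ Ioo (a : ℝ) (a + 1)) :
    HasDerivAt gaussMap (-(x ^ 2)⁻¹) x := by
  refine ((hasDerivAt_inv hx).sub_const (a : ℝ)).congr_of_eventuallyEq ?_
  filter_upwards [(continuousAt_inv₀ hx).eventually_mem (isOpen_Ioo.mem_nhds h),
    eventually_ne_nhds hx] with y hy hy0
  exact gaussMap_eq_inv_sub_natCast a hy0 (Ioo_subset_Ico_self hy)

theorem cfDigit_zero (x : ℝ) : cfDigit x 0 = ⌊x⁻¹⌋₊ := rfl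

theorem cfDigit_succ (x : ℝ) (k : ℕ) : cfDigit x (k + 1) = cfDigit (gaussMap x) k := by
  rw [cfDigit, cfDigit, Function.iterate_succ_apply]

end GaussMap

section Cylinder

theorem wordCyl_zero (i : Fin 0 → ℕ+) : wordCyl 0 i = {t | t ∈ Ioo (0 : ℝ) 1 ∧ Irrational t} := by
  simp [wordCyl]

theorem wordCyl_succ (n : ℕ) (i : Fin (n + 1) → ℕ+) :
    wordCyl (n + 1) i = (fun s => ((i 0 : ℝ) + s)⁻¹) '' wordCyl n (Fin.tail i) := by
  ext x
  constructor
  · rintro ⟨hx, hirr, hdigit⟩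
    have hfloor : ⌊x⁻¹⌋₊ = (i 0 : ℕ) := hdigit 0
    have hT := gaussMap_eq_inv_sub_floor hx.1
    have hinv_ne : x⁻¹ ≠ ⌊x⁻¹⌋₊ := hirr.inv.ne_nat _
    refine ⟨gaussMap x, ⟨⟨?_, ?_⟩, ?_, fun k => ?_⟩, ?_⟩
    · rw [hT, sub_pos]
      exact (Nat.floor_le (inv_pos.mpr hx.1).le).lt_of_ne' hinv_ne
    · rw [hT, sub_lt_iff_lt_add']
      exact Nat.lt_floor_add_one _
    · rw [hT]
      exact hirr.inv.sub_natCast _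
    · rw [← cfDigit_succ]
      exact hdigit k.succ
    · simp only [hT, ← hfloor, add_sub_cancel, inv_inv]
  · rintro ⟨s, ⟨hs, hirr, hdigit⟩, rfl⟩
    have ha : (1 : ℝ) ≤ (i 0 : ℕ) := by exact_mod_cast (i 0).pos
    have hpos : 0 < ((i 0 : ℕ) : ℝ) + s := by linarith [hs.1]
    refine ⟨⟨inv_pos.mpr hpos, inv_lt_one_of_one_lt₀ (by linarith [hs.1])⟩,
      (hirr.natCast_add _).inv, Fin.cases ?_ fun k => ?_⟩
    · rw [Fin.val_zero, cfDigit_zero, inv_inv, Nat.floor_eq_iff hpos.le]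
      constructor <;> linarith [hs.1, hs.2]
    · rw [Fin.val_succ, cfDigit_succ, gaussMap_inv_natCast_add _ hs]
      exact hdigit k

end Cylinder

section CylinderMap

noncomputable def cylMap : List ℕ+ → ℝ → ℝ
  | [], t => t
  | a :: w, t => ((a : ℝ) + cylMap w t)⁻¹

@[simp] theorem cylMap_nil (t : ℝ) : cylMap [] t = t := rfl

@[simp] theorem cylMap_cons (a : ℕ+) (w : List ℕ+) (t : ℝ) :
    cylMap (a :: w) t = ((a : ℝ) + cylMap w t)⁻¹ := rfl

theorem cylMap_mem_Ioo {t : ℝ} (ht : t ∈ Ioo (0 : ℝ) 1) (w : List ℕ+) :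
    cylMap w t ∈ Ioo (0 : ℝ) 1 := by
  induction w with
  | nil => exact ht
  | cons a w ih =>
    have ha : (1 : ℝ) ≤ (a : ℕ) := by exact_mod_cast a.pos
    exact ⟨inv_pos.mpr (by linarith [ih.1]), inv_lt_one_of_one_lt₀ (by linarith [ih.1])⟩

theorem cylMap_nonneg {t : ℝ} (ht : 0 ≤ t) (w : List ℕ+) : 0 ≤ cylMap w t := by
  induction w with
  | nil => exact ht
  | cons a w ih => exact inv_nonneg.mpr (by positivity)

theorem wordCyl_eq_image_cylMap (n : ℕ) (i : Fin n → ℕ+) :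
    wordCyl n i = cylMap (List.ofFn i) '' {t | t ∈ Ioo (0 : ℝ) 1 ∧ Irrational t} := by
  induction n with
  | zero => exact (wordCyl_zero i).trans (image_id' _).symm
  | succ n ih =>
    rw [wordCyl_succ, ih, image_image, List.ofFn_succ]
    rfl

structure MobiusCoeffs where
  p : ℕ
  p' : ℕ
  q : ℕ
  q' : ℕ

/-- `cylMap w t = (p + p' t) / (q + q' t)` for `cylCoeffs w = ⟨p, p', q, q'⟩` (see
`cylMap_mul_cylDen`): `q`, `q'` (resp. `p`, `p'`) are the last two continuant denominators
(resp. numerators) of `w`. -/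
def cylCoeffs : List ℕ+ → MobiusCoeffs
  | [] => ⟨0, 1, 1, 0⟩
  | a :: w => ⟨(cylCoeffs w).q, (cylCoeffs w).q', a * (cylCoeffs w).q + (cylCoeffs w).p,
      a * (cylCoeffs w).q' + (cylCoeffs w).p'⟩

-- The second inequality is only there to carry the induction.
theorem cylCoeffs_q'_le_q (w : List ℕ+) :
    (cylCoeffs w).q' ≤ (cylCoeffs w).q ∧
      (cylCoeffs w).p' + (cylCoeffs w).q' ≤ (cylCoeffs w).p + (cylCoeffs w).q := by
  induction w with
  | nil => simp [cylCoeffs]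
  | cons a w ih =>
    have ha : 1 ≤ (a : ℕ) := a.pos
    simp only [cylCoeffs]
    constructor <;> nlinarith [ih.1, ih.2]

noncomputable def cylNum (w : List ℕ+) (t : ℝ) : ℝ := (cylCoeffs w).p + (cylCoeffs w).p' * t

noncomputable def cylDen (w : List ℕ+) (t : ℝ) : ℝ := (cylCoeffs w).q + (cylCoeffs w).q' * t

@[simp] theorem cylNum_nil (t : ℝ) : cylNum [] t = t := by simp [cylNum, cylCoeffs]

@[simp] theorem cylDen_nil (t : ℝ) : cylDen [] t = 1 := by simp [cylDen, cylCoeffs]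

theorem cylNum_cons (a : ℕ+) (w : List ℕ+) (t : ℝ) : cylNum (a :: w) t = cylDen w t := rfl

theorem cylDen_cons (a : ℕ+) (w : List ℕ+) (t : ℝ) :
    cylDen (a :: w) t = a * cylDen w t + cylNum w t := by
  simp only [cylDen, cylNum, cylCoeffs]
  push_cast
  ring

theorem cylMap_mul_cylDen {t : ℝ} (ht : 0 ≤ t) (w : List ℕ+) :
    cylMap w t * cylDen w t = cylNum w t := by
  induction w with
  | nil => simp
  | cons a w ih =>
    have hpos : 0 < (a : ℝ) + cylMap w t := by positivity [cylMap_nonneg ht w]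
    rw [cylMap_cons, cylDen_cons, cylNum_cons, ← ih, ← add_mul, inv_mul_cancel_left₀ hpos.ne']

theorem cylDen_cons_eq_mul {t : ℝ} (ht : 0 ≤ t) (a : ℕ+) (w : List ℕ+) :
    cylDen (a :: w) t = ((a : ℝ) + cylMap w t) * cylDen w t := by
  rw [cylDen_cons, ← cylMap_mul_cylDen ht]
  ring

theorem cylDen_pos {t : ℝ} (ht : 0 ≤ t) (w : List ℕ+) : 0 < cylDen w t := by
  induction w with
  | nil => simp
  | cons a w ih =>
    rw [cylDen_cons_eq_mul ht]
    have := cylMap_nonneg ht w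
    positivity

theorem cylDen_zero_le {t : ℝ} (ht : 0 ≤ t) (w : List ℕ+) : cylDen w 0 ≤ cylDen w t := by
  simp only [cylDen, mul_zero, add_zero]
  exact le_add_of_nonneg_right (mul_nonneg (Nat.cast_nonneg _) ht)

theorem cylDen_le_two_mul {t : ℝ} (ht : t ∈ Icc (0 : ℝ) 1) (w : List ℕ+) :
    cylDen w t ≤ 2 * cylDen w 0 := by
  have hq : ((cylCoeffs w).q' : ℝ) ≤ (cylCoeffs w).q := by exact_mod_cast (cylCoeffs_q'_le_q w).1
  simp only [cylDen]
  nlinarith [(cylCoeffs w).q'.cast_nonneg (α := ℝ), ht.1, ht.2]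

theorem abs_cylMap_sub {t s : ℝ} (ht : 0 ≤ t) (hs : 0 ≤ s) (w : List ℕ+) :
    |cylMap w t - cylMap w s| = |t - s| / (cylDen w t * cylDen w s) := by
  induction w with
  | nil => simp
  | cons a w ih =>
    have hx : 0 < (a : ℝ) + cylMap w t := by positivity [cylMap_nonneg ht w]
    have hy : 0 < (a : ℝ) + cylMap w s := by positivity [cylMap_nonneg hs w]
    have hdt := cylDen_pos ht w
    have hds := cylDen_pos hs w
    rw [cylMap_cons, cylMap_cons, inv_sub_inv hx.ne' hy.ne', abs_div, add_sub_add_left_eq_sub,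
      abs_sub_comm, ih, abs_of_pos (mul_pos hx hy), cylDen_cons_eq_mul ht, cylDen_cons_eq_mul hs]
    field_simp

end CylinderMap

section Distortion

theorem hasDerivAt_iterate_gaussMap_cylMap {t : ℝ} (ht : t ∈ Ioo (0 : ℝ) 1) (w : List ℕ+) :
    HasDerivAt gaussMap^[w.length] ((-1) ^ w.length * cylDen w t ^ 2) (cylMap w t) := by
  induction w with
  | nil => simpa using hasDerivAt_id t
  | cons a w ih =>
    have hy := cylMap_mem_Ioo ht w
    have hpos : 0 < (a : ℝ) + cylMap w t := by positivity [hy.1]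
    have hT : HasDerivAt gaussMap (-((a : ℝ) + cylMap w t) ^ 2) (cylMap (a :: w) t) := by
      have := hasDerivAt_gaussMap a (x := ((a : ℝ) + cylMap w t)⁻¹) (inv_ne_zero hpos.ne')
        (by rw [inv_inv]; constructor <;> linarith [hy.1, hy.2])
      rwa [inv_pow, inv_inv] at this
    rw [List.length_cons, Function.iterate_succ]
    refine (ih.comp_of_eq _ hT (gaussMap_inv_natCast_add _ hy).symm).congr_deriv ?_
    rw [cylDen_cons_eq_mul ht.1.le]
    ring

theorem deriv_iterate_gaussMap_of_mem_wordCyl {n : ℕ} {i : Fin n → ℕ+} {x : ℝ}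
    (hx : x ∈ wordCyl n i) :
    ∃ D, cylDen (List.ofFn i) 0 ^ 2 ≤ D ∧ D ≤ 4 * cylDen (List.ofFn i) 0 ^ 2 ∧
      deriv gaussMap^[n] x = (-1) ^ n * D := by
  rw [wordCyl_eq_image_cylMap] at hx
  obtain ⟨t, ⟨ht, -⟩, rfl⟩ := hx
  have hq := cylDen_pos le_rfl (List.ofFn i)
  have hlower := cylDen_zero_le ht.1.le (List.ofFn i)
  refine ⟨_, pow_le_pow_left₀ hq.le hlower 2, ?_, ?_⟩
  · calc cylDen (List.ofFn i) t ^ 2 ≤ (2 * cylDen (List.ofFn i) 0) ^ 2 :=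
          pow_le_pow_left₀ (hq.le.trans hlower) (cylDen_le_two_mul (Ioo_subset_Icc_self ht) _) 2
      _ = 4 * cylDen (List.ofFn i) 0 ^ 2 := by ring
  · simpa using (hasDerivAt_iterate_gaussMap_cylMap ht (List.ofFn i)).deriv

theorem diam_wordCyl_le (n : ℕ) (i : Fin n → ℕ+) :
    Metric.diam (wordCyl n i) ≤ (cylDen (List.ofFn i) 0 ^ 2)⁻¹ := by
  set w := List.ofFn i
  have hq := cylDen_pos le_rfl w
  refine Metric.diam_le_of_forall_dist_le (by positivity) ?_
  rw [wordCyl_eq_image_cylMap]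
  rintro _ ⟨t, ⟨ht, -⟩, rfl⟩ _ ⟨s, ⟨hs, -⟩, rfl⟩
  rw [Real.dist_eq, abs_cylMap_sub ht.1.le hs.1.le, sq, inv_eq_one_div]
  have hts : |t - s| ≤ 1 := abs_sub_le_iff.mpr ⟨by linarith [ht.2, hs.1], by linarith [ht.1, hs.2]⟩
  exact div_le_div₀ zero_le_one hts (mul_pos hq hq) (mul_le_mul (cylDen_zero_le ht.1.le w)
    (cylDen_zero_le hs.1.le w) hq.le (cylDen_pos ht.1.le w).le)

theorem inv_eight_mul_le_diam_wordCyl (n : ℕ) (i : Fin n → ℕ+) :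
    (8 * cylDen (List.ofFn i) 0 ^ 2)⁻¹ ≤ Metric.diam (wordCyl n i) := by
  set w := List.ofFn i
  have hq := cylDen_pos le_rfl w
  obtain ⟨t, hirr, ht0, ht1⟩ := exists_irrational_btwn (show (0 : ℝ) < 1 / 2 by norm_num)
  have ht : t ∈ Ioo (0 : ℝ) 1 := ⟨ht0, by linarith⟩
  have hs : t + 1 / 2 ∈ Ioo (0 : ℝ) 1 := ⟨by linarith, by linarith⟩
  have hmem : ∀ u ∈ Ioo (0 : ℝ) 1, Irrational u → cylMap w u ∈ wordCyl n i := fun u hu hirr =>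
    (wordCyl_eq_image_cylMap n i).symm ▸ mem_image_of_mem _ ⟨hu, hirr⟩
  have hbdd : Bornology.IsBounded (wordCyl n i) :=
    Metric.isBounded_Ioo (0 : ℝ) 1 |>.subset fun _ hx => hx.1
  have hirr' : Irrational (t + 1 / 2) := by
    simpa using hirr.add_ratCast (1 / 2)
  refine le_trans ?_ (Metric.dist_le_diam_of_mem hbdd (hmem _ hs hirr') (hmem _ ht hirr))
  rw [Real.dist_eq, abs_cylMap_sub hs.1.le ht.1.le, add_sub_cancel_left, abs_of_pos one_half_pos]
  calc (8 * cylDen w 0 ^ 2)⁻¹ = 1 / 2 / ((2 * cylDen w 0) * (2 * cylDen w 0)) := by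
        field_simp; ring
    _ ≤ 1 / 2 / (cylDen w (t + 1 / 2) * cylDen w t) :=
        div_le_div_of_nonneg_left one_half_pos.le
          (mul_pos (cylDen_pos hs.1.le w) (cylDen_pos ht.1.le w))
          (mul_le_mul (cylDen_le_two_mul (Ioo_subset_Icc_self hs) w)
            (cylDen_le_two_mul (Ioo_subset_Icc_self ht) w) (cylDen_pos ht.1.le w).le
            (by positivity))

end Distortion

/-- **Bounded distortion for the Gauss map** (Proposition 2.4): there is `C > 0` such that
for every `n ≥ 1`, every word `(i_1,…,i_n) ∈ ℕ^n`, and all `x, y ∈ I_{i_1…i_n}`,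
`C⁻¹ ≤ (T^n)'(x)/(T^n)'(y) ≤ C`; moreover `C⁻¹ ≤ |(T^n)'(x)| · |I_{i_1…i_n}| ≤ C`. -/
theorem bounded_distortion :
    ∃ C : ℝ, 0 < C ∧ ∀ n : ℕ, 1 ≤ n → ∀ i : Fin n → ℕ+,
      (∀ x ∈ wordCyl n i, ∀ y ∈ wordCyl n i,
        C⁻¹ ≤ deriv (gaussMap^[n]) x / deriv (gaussMap^[n]) y ∧
          deriv (gaussMap^[n]) x / deriv (gaussMap^[n]) y ≤ C) ∧
      (∀ x ∈ wordCyl n i,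
        C⁻¹ ≤ |deriv (gaussMap^[n]) x| * Metric.diam (wordCyl n i) ∧
          |deriv (gaussMap^[n]) x| * Metric.diam (wordCyl n i) ≤ C) := by
  refine ⟨8, by norm_num, fun n _ i => ?_⟩
  set q := cylDen (List.ofFn i) 0
  have hq : 0 < q ^ 2 := pow_pos (cylDen_pos le_rfl _) 2
  refine ⟨fun x hx y hy => ?_, fun x hx => ?_⟩
  · obtain ⟨D, hqD, hDq, hx⟩ := deriv_iterate_gaussMap_of_mem_wordCyl hx
    obtain ⟨E, hqE, hEq, hy⟩ := deriv_iterate_gaussMap_of_mem_wordCyl hy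
    rw [hx, hy, mul_div_mul_left _ _ (pow_ne_zero _ (by norm_num)),
      le_div_iff₀ (by linarith), div_le_iff₀ (by linarith)]
    constructor <;> linarith
  · obtain ⟨D, hqD, hDq, hx⟩ := deriv_iterate_gaussMap_of_mem_wordCyl hx
    rw [hx, abs_mul, abs_pow, abs_neg, abs_one, one_pow, one_mul, abs_of_nonneg (by linarith)]
    constructor
    · calc (8 : ℝ)⁻¹ = q ^ 2 * (8 * q ^ 2)⁻¹ := by
            rw [mul_inv, mul_left_comm, mul_inv_cancel₀ hq.ne', mul_one]
        _ ≤ D * Metric.diam (wordCyl n i) :=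
            mul_le_mul hqD (inv_eight_mul_le_diam_wordCyl n i) (by positivity) (by linarith)
    · calc D * Metric.diam (wordCyl n i) ≤ 4 * q ^ 2 * (q ^ 2)⁻¹ :=
            mul_le_mul hDq (diam_wordCyl_le n i) Metric.diam_nonneg (by positivity)
        _ = 4 := by rw [mul_assoc, mul_inv_cancel₀ hq.ne', mul_one]
        _ ≤ 8 := by norm_num
end

section
/- The function −log|T′| is locally Hölder with exponent parameter α = 2/3 for the Gauss map: there exists C > 0 such that for every n ≥ 1 and every word (i_1,…,i_n) ∈ ℕ^n, sup{ |log|T′(x)| − log|T′(y)|| : x, y ∈ I_{i_1…i_n} } ≤ C·(2/3)^n. -/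
/-!
On a level-`(n+1)` cylinder `x⁻¹ = i₁ + T x` with `T x` in the shifted level-`n` cylinder.
For `a ≥ 1` the map `s ↦ log (a + exp s)` is `1/2`-Lipschitz on `s ≤ 0`, so `log x` varies at
most half as much on a cylinder as `log (T x)` does on its shift, and on a level-one cylinder
`x⁻¹ ∈ (a, a+1)` bounds the variation by `log (1 + 1/a) ≤ 1`. Hence `log x`, and so
`log |T' x| = -2 log x`, varies by at most `2 (1/2)^(n-1) ≤ 4 (2/3)^n` on a level-`n` cylinder.
-/

open Real Set

lemma abs_log_add_sub_log_add_le_one {a u v : ℝ} (ha : 1 ≤ a) (hu : u ∈ Icc (0 : ℝ) 1)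
    (hv : v ∈ Icc (0 : ℝ) 1) : |log (a + u) - log (a + v)| ≤ 1 := by
  have h_mem {w : ℝ} (hw : w ∈ Icc (0 : ℝ) 1) :
      log a ≤ log (a + w) ∧ log (a + w) ≤ log (a + 1) :=
    ⟨log_le_log (by linarith) (by linarith [hw.1]),
      log_le_log (by linarith [hw.1]) (by linarith [hw.2])⟩
  have h_gap : log (a + 1) - log a ≤ 1 := by
    have h_ratio : (a + 1) / a ≤ 2 := by rw [div_le_iff₀ (by linarith)]; linarith
    linarith [log_div (by linarith : a + 1 ≠ 0) (by linarith : a ≠ 0),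
      log_le_sub_one_of_pos (by positivity : 0 < (a + 1) / a)]
  rw [abs_sub_le_iff]
  constructor <;> linarith [h_mem hu, h_mem hv]

lemma abs_log_add_sub_log_add_le_half {a u v : ℝ} (ha : 1 ≤ a) (hu : u ∈ Ioc (0 : ℝ) 1)
    (hv : v ∈ Ioc (0 : ℝ) 1) :
    |log (a + u) - log (a + v)| ≤ (1 / 2) * |log u - log v| := by
  wlog huv : u ≤ v generalizing u v
  · rw [abs_sub_comm, abs_sub_comm (log u)]
    exact this hv hu (le_of_not_ge huv)
  obtain ⟨hu0, hu1⟩ := hu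
  obtain ⟨hv0, hv1⟩ := hv
  rw [abs_sub_comm, abs_of_nonneg (sub_nonneg.2 (log_le_log (by linarith) (by linarith))),
    abs_sub_comm, abs_of_nonneg (sub_nonneg.2 (log_le_log hu0 huv))]
  -- `u (a+v)² ≤ v (a+u)²` is `(v - u)(a² - uv) ≥ 0`
  have h_sq : log (u * (a + v) ^ 2) ≤ log (v * (a + u) ^ 2) := by
    apply log_le_log (by positivity)
    nlinarith [mul_nonneg (sub_nonneg.2 huv) (sub_nonneg.2 (show u * v ≤ a * a by nlinarith))]
  rw [log_mul hu0.ne' (by positivity), log_mul hv0.ne' (by positivity), log_pow, log_pow] at h_sq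
  push_cast at h_sq
  linarith

section Cylinders

variable {n : ℕ} {i : Fin (n + 1) → ℕ+} {x : ℝ}

lemma inv_eq_digit_add_gaussMap (hx : x ∈ wordCyl (n + 1) i) :
    x⁻¹ = (i 0 : ℝ) + gaussMap x := by
  obtain ⟨⟨hx0, -⟩, -, hdig⟩ := hx
  have h_floor : ⌊x⁻¹⌋₊ = (i 0 : ℕ) := by simpa [cfDigit] using hdig 0
  rw [gaussMap, if_neg hx0.ne', Int.fract, ← Int.natCast_floor_eq_floor (by positivity), h_floor]
  push_cast
  ring

lemma gaussMap_mem_wordCyl_tail (hx : x ∈ wordCyl (n + 1) i) :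
    gaussMap x ∈ wordCyl n (Fin.tail i) := by
  obtain ⟨⟨hx0, -⟩, hirr, hdig⟩ := hx
  have h_gauss : gaussMap x = Int.fract x⁻¹ := if_neg hx0.ne'
  have h_irr : Irrational (gaussMap x) := by
    rw [h_gauss, Int.fract]
    exact hirr.inv.sub_intCast _
  refine ⟨⟨?_, ?_⟩, h_irr, fun k => ?_⟩
  · exact lt_of_le_of_ne (h_gauss ▸ Int.fract_nonneg _) (by simpa using (h_irr.ne_int 0).symm)
  · exact h_gauss ▸ Int.fract_lt_one _
  · simpa [cfDigit, Fin.tail, Function.iterate_succ_apply] using hdig k.succ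

lemma abs_log_sub_log_eq_of_mem_wordCyl {y : ℝ} (hx : x ∈ wordCyl (n + 1) i)
    (hy : y ∈ wordCyl (n + 1) i) :
    |log x - log y| = |log ((i 0 : ℝ) + gaussMap x) - log ((i 0 : ℝ) + gaussMap y)| := by
  rw [← inv_eq_digit_add_gaussMap hx, ← inv_eq_digit_add_gaussMap hy, log_inv, log_inv,
    ← abs_neg]
  ring_nf

end Cylinders

lemma abs_log_sub_log_le_of_mem_wordCyl {n : ℕ} {i : Fin (n + 1) → ℕ+} {x y : ℝ}
    (hx : x ∈ wordCyl (n + 1) i) (hy : y ∈ wordCyl (n + 1) i) :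
    |log x - log y| ≤ (1 / 2 : ℝ) ^ n := by
  induction n generalizing x y with
  | zero =>
    have hTx := gaussMap_mem_wordCyl_tail hx
    have hTy := gaussMap_mem_wordCyl_tail hy
    rw [abs_log_sub_log_eq_of_mem_wordCyl hx hy, pow_zero]
    exact abs_log_add_sub_log_add_le_one (Nat.one_le_cast.2 (i 0).pos)
      (Ioo_subset_Icc_self hTx.1) (Ioo_subset_Icc_self hTy.1)
  | succ n ih =>
    have hTx := gaussMap_mem_wordCyl_tail hx
    have hTy := gaussMap_mem_wordCyl_tail hy
    calc |log x - log y|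
        = |log ((i 0 : ℝ) + gaussMap x) - log ((i 0 : ℝ) + gaussMap y)| :=
          abs_log_sub_log_eq_of_mem_wordCyl hx hy
      _ ≤ (1 / 2) * |log (gaussMap x) - log (gaussMap y)| :=
          abs_log_add_sub_log_add_le_half (Nat.one_le_cast.2 (i 0).pos)
            (Ioo_subset_Ioc_self hTx.1) (Ioo_subset_Ioc_self hTy.1)
      _ ≤ (1 / 2) * (1 / 2 : ℝ) ^ n := by gcongr; exact ih hTx hTy
      _ = (1 / 2 : ℝ) ^ (n + 1) := by ring

/-- **`-log|T'|` is locally Hölder with parameter `α = 2/3`** for the Gauss map: there is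
`C > 0` such that the variation of `log|T'| = log (x⁻²)` on any level-`n` cylinder is at
most `C (2/3)^n`. -/
theorem log_deriv_locally_holder :
    ∃ C : ℝ, 0 < C ∧ ∀ n : ℕ, 1 ≤ n → ∀ i : Fin n → ℕ+,
      ∀ x ∈ wordCyl n i, ∀ y ∈ wordCyl n i,
        |Real.log (x⁻¹ ^ 2) - Real.log (y⁻¹ ^ 2)| ≤ C * (2 / 3) ^ n := by
  refine ⟨4, by norm_num, fun n hn i x hx y hy => ?_⟩
  obtain ⟨m, rfl⟩ : ∃ m, n = m + 1 := ⟨n - 1, by omega⟩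
  calc |log (x⁻¹ ^ 2) - log (y⁻¹ ^ 2)| = 2 * |log x - log y| := by
        rw [log_pow, log_pow, log_inv, log_inv, ← abs_two, ← abs_mul, ← abs_neg]
        push_cast
        ring_nf
    _ ≤ 2 * (1 / 2) ^ m := by gcongr; exact abs_log_sub_log_le_of_mem_wordCyl hx hy
    _ ≤ 2 * (2 / 3) ^ m := by
        gcongr 2 * ?_
        exact pow_le_pow_left₀ (by norm_num) (by norm_num) m
    _ ≤ 4 * (2 / 3) ^ (m + 1) := by
        rw [pow_succ]
        nlinarith [pow_nonneg (by norm_num : (0 : ℝ) ≤ 2 / 3) m]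
end
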